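/- arXiv:1003.3407 — 9 statements merged into one kernel-verified Lean document; each statement's English description precedes it below -/
import Mathlib

section
/- (PBW / triangular decomposition of the rational Cherednik algebra of type ℤ/lℤ, Proposition 12(1): H_κ ≅ ℂ[z] ⊗ ℂ[ℤ/lℤ] ⊗ ℂ[∂_κ] as ℂ-vector spaces.) The family of operators {Z^a ∘ Γ^b ∘ ∂_κ^c : a, c ∈ ℤ_{≥0}, 0 ≤ b ≤ l−1} is a basis of H_κ as a ℂ-vector space (it is ℂ-linearly independent in End_ℂ(L) and spans H_κ). -/
open LaurentPolynomial

noncomputable section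

/-- The ℂ-algebra `L = ℂ[z, z⁻¹]` of Laurent polynomials (`T n` is the monomial `zⁿ`). -/
abbrev Lau : Type := LaurentPolynomial ℂ

/-- Multiplication by `z`, as a ℂ-linear endomorphism of `L`. -/
def Zmul : Module.End ℂ Lau := LinearMap.mulLeft ℂ (T 1)

/-- Multiplication by `z⁻¹`, as a ℂ-linear endomorphism of `L`. -/
def Zinv : Module.End ℂ Lau := LinearMap.mulLeft ℂ (T (-1))

/-- The ℂ-algebra automorphism `Γ` of `L` determined by `Γ(z) = ζ⁻¹ z`,
i.e. `Γ(zⁿ) = ζ⁻ⁿ zⁿ`. -/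
def Gam (ζ : ℂ) : Module.End ℂ Lau :=
  (Finsupp.lsum ℂ fun n : ℤ => LinearMap.toSpanSingleton ℂ Lau ((ζ⁻¹ ^ n) • T n)) ∘ₗ
    (AddMonoidAlgebra.coeffLinearEquiv ℂ).toLinearMap

/-- The formal derivative `d/dz : zⁿ ↦ n zⁿ⁻¹` on `L`. -/
def Deriv : Module.End ℂ Lau :=
  (Finsupp.lsum ℂ fun n : ℤ => LinearMap.toSpanSingleton ℂ Lau ((n : ℂ) • T (n - 1))) ∘ₗ
    (AddMonoidAlgebra.coeffLinearEquiv ℂ).toLinearMap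

/-- The idempotent `e_i = (1/l)·Σ_{j=0}^{l−1} ζ^{ij} Γ^j` of `ℂ(ℤ/lℤ)`, regarded as an
endomorphism of `L`. -/
def eIdem (l : ℕ) (ζ : ℂ) (i : Fin l) : Module.End ℂ Lau :=
  (l : ℂ)⁻¹ • ∑ j ∈ Finset.range l, (ζ ^ ((i : ℕ) * j)) • (Gam ζ) ^ j

/-- The Dunkl operator `∂_κ = d/dz + l z⁻¹ Σ_{i=0}^{l−1} κ_i e_i` (where `κ_0 = 0`). -/
def Dunkl (l : ℕ) (ζ : ℂ) (κ : Fin l → ℂ) : Module.End ℂ Lau :=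
  Deriv + (l : ℂ) • (Zinv * ∑ i : Fin l, κ i • eIdem l ζ i)

/-- The rational Cherednik algebra `H_κ` of type `ℤ/lℤ`: the unital ℂ-subalgebra of
`End_ℂ(L)` generated by `Z`, `Γ` and `∂_κ`. -/
def Cher (l : ℕ) (ζ : ℂ) (κ : Fin l → ℂ) : Subalgebra ℂ (Module.End ℂ Lau) :=
  Algebra.adjoin ℂ {Zmul, Gam ζ, Dunkl l ζ κ}


/-!
Spanning: the generators satisfy `ΓZ = ζ⁻¹ZΓ`, `Γˡ = 1`, `∂Γ = ζ⁻¹Γ∂` and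
`∂Z = Z∂ + 1 + Σᵢ l(κᵢ₊₁ - κᵢ)eᵢ`, so left multiplication by each of them preserves the span of
the ordered monomials `Zᵃ Γᵇ ∂ᶜ`, which contains `1`; hence that span is the whole algebra.

Independence: each monomial is a weighted shift,
`Zᵃ Γᵇ ∂ᶜ zⁿ = ζ^(-b(n-c)) ∏_{k<c} ν(n-k) · z^(n+a-c)` with `ν(n) = n + l κ_(n mod l)`,
so a linear relation splits according to `a - c` into relations between the functions
`n ↦ ζ^(-b(n-c)) ∏_{k<c} ν(n-k)`. Along a progression `n = lN + r` the root of unity is constant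
and `ν(lN + x) = lN + ν(x)` makes the product a polynomial in `N` of degree exactly `c`;
independence of polynomials of distinct degrees and Dedekind's independence of the characters
`r ↦ ζ^(-br)` finish the argument.
-/

theorem LaurentPolynomial.linearMap_ext_T {R M : Type*} [CommSemiring R] [AddCommMonoid M]
    [Module R M] {f g : R[T;T⁻¹] →ₗ[R] M} (h : ∀ n, f (T n) = g (T n)) : f = g :=
  LinearMap.ext fun p => p.induction_on' (fun p q hp hq => by rw [map_add, map_add, hp, hq])
    fun n a => by rw [← smul_eq_C_mul, map_smul, map_smul, h]

theorem geom_sum_eq_ite_of_pow_eq_one {K : Type*} [Field K] [DecidableEq K] {ξ : K} {k : ℕ}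
    (h : ξ ^ k = 1) : ∑ j ∈ Finset.range k, ξ ^ j = if ξ = 1 then (k : K) else 0 := by
  split_ifs with h1
  · simp [h1]
  · rw [geom_sum_eq h1, h, sub_self, zero_div]

theorem linearIndependent_pow_apply {K ι : Type*} [Field K] {x : ι → K}
    (hx : Function.Injective x) : LinearIndependent K fun i (r : ℕ) => x i ^ r :=
  (linearIndependent_monoidHom (Multiplicative ℕ) K).comp (fun i => powersHom K (x i))
    ((powersHom K).injective.comp hx)

theorem linearIndependent_pi_of_forall {ι X R M : Type*} [CommRing R] [AddCommGroup M]
    [Module R M] {v : ι → X → M} (h : ∀ x, LinearIndependent R fun i => v i x) :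
    LinearIndependent (X → R) v :=
  linearIndependent_iff'.2 fun s g hg i hi => funext fun x =>
    linearIndependent_iff'.1 (h x) s (fun j => g j x) (by simpa using congr_fun hg x) i hi

theorem Polynomial.linearIndependent_eval_natCast {K ι : Type*} [Field K] [CharZero K]
    {p : ι → Polynomial K} (hp : LinearIndependent K p) :
    LinearIndependent K fun i (N : ℕ) => (p i).eval (N : K) :=
  hp.map' (LinearMap.pi fun N : ℕ => leval (N : K)) <|
    LinearMap.ker_eq_bot'.mpr fun q hq => eq_zero_of_infinite_isRoot q <|
      Set.infinite_of_injective_forall_mem Nat.cast_injective fun N => congr_fun hq N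

theorem LaurentPolynomial.linearIndependent_of_apply_T {R ι : Type*} [CommRing R]
    {B : ι → Module.End R R[T;T⁻¹]} (d : ι → ℤ) (v : ι → ℤ → R)
    (hB : ∀ i n, B i (T n) = v i n • T (n + d i)) (hv : ∀ δ, LinearIndepOn R v {i | d i = δ}) :
    LinearIndependent R B := by
  classical
  refine linearIndependent_iff'.2 fun s g hg i hi => ?_
  have hfiber : ∑ j ∈ s.filter (d · = d i), g j • v j = 0 := by
    funext n
    have := congr_arg (fun f : Module.End R R[T;T⁻¹] => (f (T n)).coeff (n + d i)) hg
    simpa [hB, Finset.sum_filter, eq_comm] using this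
  exact linearIndepOn_finset_iff.mp ((hv (d i)).mono fun j hj => (Finset.mem_filter.mp hj).2)
    g hfiber i (Finset.mem_filter.mpr ⟨hi, rfl⟩)

namespace Submodule

variable {R A : Type*} [CommSemiring R] [Semiring A] [Algebra R A]

def leftStabilizer (M : Submodule R A) : Subalgebra R A where
  carrier := {a | ∀ x ∈ M, a * x ∈ M}
  mul_mem' {a b} ha hb x hx := by
    rw [mul_assoc]
    exact ha _ (hb x hx)
  add_mem' {a b} ha hb x hx := by
    rw [add_mul]
    exact M.add_mem (ha x hx) (hb x hx)
  algebraMap_mem' r x hx := by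
    rw [Algebra.algebraMap_eq_smul_one, smul_mul_assoc, one_mul]
    exact M.smul_mem r hx

theorem mem_leftStabilizer_span_range {ι : Type*} {v : ι → A} {a : A}
    (h : ∀ i, a * v i ∈ span R (Set.range v)) : a ∈ leftStabilizer (span R (Set.range v)) := by
  intro x hx
  induction hx using span_induction with
  | mem y hy =>
    obtain ⟨i, rfl⟩ := hy
    exact h i
  | zero => simp
  | add y z _ _ hy hz =>
    rw [mul_add]
    exact add_mem hy hz
  | smul r y _ hy =>
    rw [mul_smul_comm]
    exact smul_mem _ r hy

theorem adjoin_le_of_subset_leftStabilizer {s : Set A} {M : Submodule R A} (h1 : 1 ∈ M)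
    (hs : s ⊆ leftStabilizer M) : Subalgebra.toSubmodule (Algebra.adjoin R s) ≤ M :=
  fun x hx => by simpa using Algebra.adjoin_le hs hx 1 h1

end Submodule

namespace Cherednik

section Monomials

theorem coeffLinearEquiv_T (n : ℤ) :
    AddMonoidAlgebra.coeffLinearEquiv ℂ (T n : Lau) = Finsupp.single n 1 := rfl

theorem zmul_T (n : ℤ) : Zmul (T n) = T (n + 1) := by
  rw [Zmul, LinearMap.mulLeft_apply, ← T_add, add_comm]

theorem zinv_T (n : ℤ) : Zinv (T n) = T (n - 1) := by
  rw [Zinv, LinearMap.mulLeft_apply, ← T_add, neg_add_eq_sub]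

theorem gam_T (ζ : ℂ) (n : ℤ) : Gam ζ (T n) = ζ⁻¹ ^ n • T n := by
  rw [Gam, LinearMap.comp_apply, LinearEquiv.coe_coe, coeffLinearEquiv_T, Finsupp.lsum_single,
    LinearMap.toSpanSingleton_apply, one_smul]

theorem deriv_T (n : ℤ) : Deriv (T n) = (n : ℂ) • T (n - 1) := by
  rw [Deriv, LinearMap.comp_apply, LinearEquiv.coe_coe, coeffLinearEquiv_T, Finsupp.lsum_single,
    LinearMap.toSpanSingleton_apply, one_smul]

theorem zmul_pow_T (a : ℕ) (n : ℤ) : (Zmul ^ a) (T n) = T (n + a) := by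
  induction a with
  | zero => simp
  | succ a ih =>
    rw [pow_succ', Module.End.mul_apply, ih, zmul_T]
    push_cast
    ring_nf

theorem gam_pow_T (ζ : ℂ) (b : ℕ) (n : ℤ) : (Gam ζ ^ b) (T n) = (ζ⁻¹ ^ b) ^ n • T n := by
  induction b with
  | zero => simp
  | succ b ih =>
    rw [pow_succ, Module.End.mul_apply, gam_T, map_smul, ih, smul_smul, pow_succ, mul_zpow,
      mul_comm]

end Monomials

section Residues

variable {l : ℕ} [NeZero l]

def residue (l : ℕ) [NeZero l] (n : ℤ) : Fin l := ⟨(n : ZMod l).val, ZMod.val_lt _⟩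

theorem residue_eq_iff (n : ℤ) (i : Fin l) : residue l n = i ↔ (l : ℤ) ∣ (i : ℤ) - n := by
  rw [← ZMod.intCast_zmod_eq_zero_iff_dvd, Int.cast_sub, sub_eq_zero, Int.cast_natCast,
    Fin.ext_iff]
  constructor
  · intro h
    rw [← h, residue, ZMod.natCast_zmod_val]
  · intro h
    change (n : ZMod l).val = i
    rw [← h, ZMod.val_natCast_of_lt i.2]

theorem residue_add_mul (n N : ℤ) : residue l (n + l * N) = residue l n := by
  simp [residue]

theorem residue_add_one (n : ℤ) : residue l (n + 1) = residue l n + 1 := by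
  apply Fin.ext
  simp only [residue, Int.cast_add, Int.cast_one, ZMod.val_add, ZMod.val_one_eq_one_mod,
    Fin.add_def]
  rfl

def dunklCoeff (l : ℕ) [NeZero l] (κ : Fin l → ℂ) (n : ℤ) : ℂ := n + l * κ (residue l n)

theorem dunklCoeff_add_mul (κ : Fin l → ℂ) (n N : ℤ) :
    dunklCoeff l κ (n + l * N) = dunklCoeff l κ n + l * N := by
  rw [dunklCoeff, dunklCoeff, residue_add_mul]
  push_cast
  ring

variable {ζ : ℂ} (hζ : IsPrimitiveRoot ζ l)
include hζ

theorem sum_pow_mul_inv_pow_zpow (i : Fin l) (n : ℤ) :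
    ∑ j ∈ Finset.range l, ζ ^ ((i : ℕ) * j) * (ζ⁻¹ ^ j) ^ n =
      if residue l n = i then (l : ℂ) else 0 := by
  have hz : ζ ≠ 0 := hζ.ne_zero (NeZero.ne l)
  have hterm (j : ℕ) : ζ ^ ((i : ℕ) * j) * (ζ⁻¹ ^ j) ^ n = (ζ ^ ((i : ℤ) - n)) ^ j := by
    rw [inv_pow, inv_zpow', ← zpow_natCast, ← zpow_natCast, ← zpow_mul, ← zpow_natCast,
      ← zpow_mul, ← zpow_add₀ hz]
    congr 1
    push_cast
    ring
  have hpow : (ζ ^ ((i : ℤ) - n)) ^ l = 1 := by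
    rw [← zpow_natCast, ← zpow_mul, mul_comm, zpow_mul, zpow_natCast, hζ.pow_eq_one, one_zpow]
  simp_rw [hterm]
  rw [geom_sum_eq_ite_of_pow_eq_one hpow]
  exact if_congr ((hζ.zpow_eq_one_iff_dvd _).trans (residue_eq_iff n i).symm) rfl rfl

theorem eIdem_T (i : Fin l) (n : ℤ) :
    eIdem l ζ i (T n) = if residue l n = i then T n else 0 := by
  have hl : (l : ℂ) ≠ 0 := Nat.cast_ne_zero.mpr (NeZero.ne l)
  simp only [eIdem, LinearMap.smul_apply, LinearMap.sum_apply, gam_pow_T, smul_smul,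
    ← Finset.sum_smul, sum_pow_mul_inv_pow_zpow hζ]
  split_ifs <;> simp [hl]

theorem sum_smul_eIdem_T (f : Fin l → ℂ) (n : ℤ) :
    (∑ i, f i • eIdem l ζ i) (T n) = f (residue l n) • T n := by
  simp [eIdem_T hζ]

theorem dunkl_T (κ : Fin l → ℂ) (n : ℤ) : Dunkl l ζ κ (T n) = dunklCoeff l κ n • T (n - 1) := by
  rw [Dunkl, LinearMap.add_apply, LinearMap.smul_apply, Module.End.mul_apply,
    sum_smul_eIdem_T hζ, map_smul, zinv_T, deriv_T, smul_smul, ← add_smul, dunklCoeff]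

theorem dunkl_pow_T (κ : Fin l → ℂ) (c : ℕ) (n : ℤ) :
    (Dunkl l ζ κ ^ c) (T n) = (∏ k ∈ Finset.range c, dunklCoeff l κ (n - k)) • T (n - c) := by
  induction c with
  | zero => simp
  | succ c ih =>
    rw [pow_succ', Module.End.mul_apply, ih, map_smul, dunkl_T hζ, smul_smul,
      Finset.prod_range_succ, mul_comm]
    push_cast
    ring_nf

end Residues

section Relations

variable {l : ℕ} {ζ : ℂ}

theorem gam_mul_zmul_pow (hζ0 : ζ ≠ 0) (a : ℕ) :
    Gam ζ * Zmul ^ a = ζ⁻¹ ^ a • (Zmul ^ a * Gam ζ) := by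
  refine LaurentPolynomial.linearMap_ext_T fun n => ?_
  simp only [Module.End.mul_apply, LinearMap.smul_apply, zmul_pow_T, gam_T, map_smul, smul_smul,
    zpow_add₀ (inv_ne_zero hζ0), zpow_natCast, mul_comm]

theorem gam_pow_eq_pow_mod (hζ : IsPrimitiveRoot ζ l) (m : ℕ) : Gam ζ ^ m = Gam ζ ^ (m % l) := by
  have hl : Gam ζ ^ l = 1 := LaurentPolynomial.linearMap_ext_T fun n => by
    rw [gam_pow_T, inv_pow, hζ.pow_eq_one, inv_one, one_zpow, one_smul, Module.End.one_apply]
  conv_lhs => rw [← Nat.div_add_mod m l, pow_add, pow_mul, hl, one_pow, one_mul]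

theorem dunkl_mul_gam_pow [NeZero l] (hζ : IsPrimitiveRoot ζ l) (κ : Fin l → ℂ) (b : ℕ) :
    Dunkl l ζ κ * Gam ζ ^ b = ζ⁻¹ ^ b • (Gam ζ ^ b * Dunkl l ζ κ) := by
  have hz : ζ⁻¹ ^ b ≠ 0 := pow_ne_zero _ (inv_ne_zero (hζ.ne_zero (NeZero.ne l)))
  refine LaurentPolynomial.linearMap_ext_T fun n => ?_
  simp only [Module.End.mul_apply, LinearMap.smul_apply, gam_pow_T, dunkl_T hζ, map_smul,
    smul_smul]
  rw [mul_comm (dunklCoeff l κ n), ← mul_assoc, ← zpow_one_add₀ hz, add_sub_cancel]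

theorem dunkl_mul_zmul [NeZero l] (hζ : IsPrimitiveRoot ζ l) (κ : Fin l → ℂ) :
    Dunkl l ζ κ * Zmul =
      Zmul * Dunkl l ζ κ + (1 + ∑ i, ((l : ℂ) * (κ (i + 1) - κ i)) • eIdem l ζ i) := by
  refine LaurentPolynomial.linearMap_ext_T fun n => ?_
  simp only [Module.End.mul_apply, LinearMap.add_apply, Module.End.one_apply, zmul_T,
    dunkl_T hζ, map_smul, sum_smul_eIdem_T hζ, add_sub_cancel_right, sub_add_cancel]
  rw [dunklCoeff, dunklCoeff, residue_add_one]
  push_cast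
  module

end Relations

def pbwMonomial (l : ℕ) (ζ : ℂ) (κ : Fin l → ℂ) (p : ℕ × Fin l × ℕ) : Module.End ℂ Lau :=
  Zmul ^ p.1 * Gam ζ ^ (p.2.1 : ℕ) * Dunkl l ζ κ ^ p.2.2

abbrev pbwSpan (l : ℕ) (ζ : ℂ) (κ : Fin l → ℂ) : Submodule ℂ (Module.End ℂ Lau) :=
  Submodule.span ℂ (Set.range (pbwMonomial l ζ κ))

section Span

open Submodule

variable {l : ℕ} [NeZero l] {ζ : ℂ} (hζ : IsPrimitiveRoot ζ l) (κ : Fin l → ℂ)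
include hζ

theorem mul_pow_mem_pbwSpan (a m c : ℕ) :
    Zmul ^ a * Gam ζ ^ m * Dunkl l ζ κ ^ c ∈ pbwSpan l ζ κ := by
  rw [gam_pow_eq_pow_mod hζ]
  exact subset_span ⟨(a, ⟨m % l, Nat.mod_lt _ (NeZero.pos l)⟩, c), rfl⟩

theorem zmul_mem_leftStabilizer : Zmul ∈ leftStabilizer (pbwSpan l ζ κ) :=
  mem_leftStabilizer_span_range fun ⟨a, b, c⟩ => by
    rw [pbwMonomial, ← mul_assoc, ← mul_assoc, ← pow_succ']
    exact mul_pow_mem_pbwSpan hζ κ _ _ _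

theorem gam_mem_leftStabilizer : Gam ζ ∈ leftStabilizer (pbwSpan l ζ κ) :=
  mem_leftStabilizer_span_range fun ⟨a, b, c⟩ => by
    rw [pbwMonomial, ← mul_assoc, ← mul_assoc, gam_mul_zmul_pow (hζ.ne_zero (NeZero.ne l)),
      smul_mul_assoc, smul_mul_assoc, mul_assoc (Zmul ^ a), ← pow_succ']
    exact smul_mem _ _ (mul_pow_mem_pbwSpan hζ κ _ _ _)

theorem eIdem_mem_leftStabilizer (i : Fin l) : eIdem l ζ i ∈ leftStabilizer (pbwSpan l ζ κ) :=
  Subalgebra.smul_mem _ (Subalgebra.sum_mem _ fun j _ =>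
    Subalgebra.smul_mem _ (Subalgebra.pow_mem _ (gam_mem_leftStabilizer hζ κ) j) _) _

theorem dunkl_mul_pbwMonomial_mem (p : ℕ × Fin l × ℕ) :
    Dunkl l ζ κ * pbwMonomial l ζ κ p ∈ pbwSpan l ζ κ := by
  obtain ⟨a, b, c⟩ := p
  induction a with
  | zero =>
    rw [pbwMonomial, pow_zero, one_mul, ← mul_assoc, dunkl_mul_gam_pow hζ, smul_mul_assoc,
      mul_assoc, ← pow_succ']
    simpa using smul_mem _ _ (mul_pow_mem_pbwSpan hζ κ 0 b (c + 1))
  | succ a ih =>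
    have hstep : pbwMonomial l ζ κ (a + 1, b, c) = Zmul * pbwMonomial l ζ κ (a, b, c) := by
      simp only [pbwMonomial, pow_succ', mul_assoc]
    have hcomm : 1 + ∑ i, ((l : ℂ) * (κ (i + 1) - κ i)) • eIdem l ζ i ∈
        leftStabilizer (pbwSpan l ζ κ) :=
      add_mem (one_mem _) (Subalgebra.sum_mem _ fun i _ =>
        Subalgebra.smul_mem _ (eIdem_mem_leftStabilizer hζ κ i) _)
    rw [hstep, ← mul_assoc, dunkl_mul_zmul hζ, add_mul, mul_assoc]
    exact add_mem (zmul_mem_leftStabilizer hζ κ _ ih) (hcomm _ (subset_span ⟨_, rfl⟩))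

theorem span_pbwMonomial_eq_cher : pbwSpan l ζ κ = Subalgebra.toSubmodule (Cher l ζ κ) := by
  refine le_antisymm (span_le.mpr ?_) (adjoin_le_of_subset_leftStabilizer ?_ ?_)
  · rintro _ ⟨⟨a, b, c⟩, rfl⟩
    rw [SetLike.mem_coe, Subalgebra.mem_toSubmodule]
    have hgen : ∀ x ∈ ({Zmul, Gam ζ, Dunkl l ζ κ} : Set (Module.End ℂ Lau)), x ∈ Cher l ζ κ :=
      fun x hx => Algebra.subset_adjoin hx
    exact mul_mem (mul_mem (pow_mem (hgen _ (by simp)) a) (pow_mem (hgen _ (by simp)) _))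
      (pow_mem (hgen _ (by simp)) c)
  · simpa using mul_pow_mem_pbwSpan hζ κ 0 0 0
  · rintro x (rfl | rfl | rfl)
    · exact zmul_mem_leftStabilizer hζ κ
    · exact gam_mem_leftStabilizer hζ κ
    · exact mem_leftStabilizer_span_range (dunkl_mul_pbwMonomial_mem hζ κ)

end Span

def dunklSeq (l : ℕ) [NeZero l] (κ : Fin l → ℂ) (r : ℤ) : Polynomial.Sequence ℂ where
  elems' c := ∏ k ∈ Finset.range c,
    (Polynomial.C (l : ℂ) * Polynomial.X + Polynomial.C (dunklCoeff l κ (r - k)))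
  degree_eq' c := by
    rw [Polynomial.degree_prod, Finset.sum_congr rfl fun k _ =>
      Polynomial.degree_linear (Nat.cast_ne_zero.mpr (NeZero.ne l) : (l : ℂ) ≠ 0)]
    simp

def pbwCoeff (l : ℕ) [NeZero l] (ζ : ℂ) (κ : Fin l → ℂ) (q : Fin l × ℕ) (n : ℤ) : ℂ :=
  (ζ⁻¹ ^ (q.1 : ℕ)) ^ (n - q.2) * ∏ k ∈ Finset.range q.2, dunklCoeff l κ (n - k)

section Independence

variable {l : ℕ} [NeZero l] {ζ : ℂ} (hζ : IsPrimitiveRoot ζ l) (κ : Fin l → ℂ)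

theorem eval_dunklSeq (r : ℤ) (c N : ℕ) :
    (dunklSeq l κ r c).eval (N : ℂ) = ∏ k ∈ Finset.range c, dunklCoeff l κ (l * N + r - k) := by
  simp only [dunklSeq, Polynomial.eval_prod, Polynomial.eval_add, Polynomial.eval_mul,
    Polynomial.eval_C, Polynomial.eval_X]
  refine Finset.prod_congr rfl fun k _ => ?_
  rw [show (l : ℤ) * N + r - k = r - k + l * (N : ℤ) by ring, dunklCoeff_add_mul]
  push_cast
  ring

include hζ

theorem pbwMonomial_T (p : ℕ × Fin l × ℕ) (n : ℤ) :
    pbwMonomial l ζ κ p (T n) = pbwCoeff l ζ κ (p.2.1, p.2.2) n • T (n + (p.1 - p.2.2)) := by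
  obtain ⟨a, b, c⟩ := p
  dsimp only [pbwMonomial, pbwCoeff]
  rw [Module.End.mul_apply, Module.End.mul_apply, dunkl_pow_T hζ, map_smul, gam_pow_T, map_smul,
    map_smul, zmul_pow_T, smul_smul, mul_comm, sub_add_eq_add_sub, add_sub_assoc]

theorem linearIndependent_pbwCoeff : LinearIndependent ℂ (pbwCoeff l ζ κ) := by
  have hz : ζ ≠ 0 := hζ.ne_zero (NeZero.ne l)
  have hchar : LinearIndependent ℂ fun (b : Fin l) (r : ℕ) => (ζ⁻¹ ^ (b : ℕ)) ^ r :=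
    linearIndependent_pow_apply fun b b' h => Fin.ext (hζ.inv.pow_inj b.2 b'.2 h)
  have hpoly : LinearIndependent (ℕ → ℂ) fun (c r N : ℕ) => (dunklSeq l κ r c).eval (N : ℂ) :=
    linearIndependent_pi_of_forall fun r =>
      Polynomial.linearIndependent_eval_natCast (dunklSeq l κ r).linearIndependent
  have hrestr : LinearIndependent ℂ fun (q : Fin l × ℕ) (n : ℤ) =>
      (ζ⁻¹ ^ (q.1 : ℕ)) ^ n * ∏ k ∈ Finset.range q.2, dunklCoeff l κ (n - k) := by
    refine LinearIndependent.of_comp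
      (LinearMap.pi fun r : ℕ => LinearMap.pi fun N : ℕ => LinearMap.proj ((l * N + r : ℕ) : ℤ))
      ?_
    convert linearIndependent_smul hchar hpoly using 1
    · funext ⟨b, c⟩ r N
      have hl : (ζ⁻¹ ^ (b : ℕ)) ^ l = 1 := by
        rw [← pow_mul, mul_comm, pow_mul, inv_pow, hζ.pow_eq_one, inv_one, one_pow]
      simp only [Function.comp_apply, LinearMap.pi_apply, LinearMap.proj_apply, eval_dunklSeq,
        zpow_natCast, pow_add, pow_mul, hl, one_pow, one_mul]
      push_cast
      rfl
    · rfl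
  convert hrestr.units_smul fun q => Units.mk0 ((ζ ^ (q.1 : ℕ)) ^ q.2) (by simp [hz]) using 1
  funext ⟨b, c⟩ n
  change pbwCoeff l ζ κ (b, c) n = (ζ ^ (b : ℕ)) ^ c *
    ((ζ⁻¹ ^ (b : ℕ)) ^ n * ∏ k ∈ Finset.range c, dunklCoeff l κ (n - k))
  rw [pbwCoeff, zpow_sub₀ (by simp [hz]), zpow_natCast, div_eq_mul_inv, inv_pow, inv_pow, inv_inv]
  ring

theorem linearIndependent_pbwMonomial : LinearIndependent ℂ (pbwMonomial l ζ κ) := by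
  refine LaurentPolynomial.linearIndependent_of_apply_T (fun p => (p.1 : ℤ) - p.2.2)
    (fun p => pbwCoeff l ζ κ (p.2.1, p.2.2)) (pbwMonomial_T hζ κ) fun δ => ?_
  refine ((linearIndependent_pbwCoeff hζ κ).linearIndepOn _).comp_of_image ?_
  rintro ⟨a, b, c⟩ h ⟨a', b', c'⟩ h' heq
  simp only [Set.mem_ofPred_eq, Prod.mk.injEq] at h h' heq ⊢
  omega

end Independence

end Cherednik

theorem pbw_basis_cherednik_general (l : ℕ) [NeZero l] (ζ : ℂ)
    (hζ : ζ = Complex.exp (2 * Real.pi * Complex.I / l))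
    (κ : Fin l → ℂ) :
    LinearIndependent ℂ (fun p : ℕ × Fin l × ℕ =>
      Zmul ^ p.1 * (Gam ζ) ^ (p.2.1 : ℕ) * (Dunkl l ζ κ) ^ p.2.2) ∧
    Submodule.span ℂ (Set.range (fun p : ℕ × Fin l × ℕ =>
      Zmul ^ p.1 * (Gam ζ) ^ (p.2.1 : ℕ) * (Dunkl l ζ κ) ^ p.2.2)) =
      Subalgebra.toSubmodule (Cher l ζ κ) := by
  have hprim : IsPrimitiveRoot ζ l := hζ ▸ Complex.isPrimitiveRoot_exp l (NeZero.ne l)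
  exact ⟨Cherednik.linearIndependent_pbwMonomial hprim κ,
    Cherednik.span_pbwMonomial_eq_cher hprim κ⟩

/-- PBW / triangular decomposition of the rational Cherednik algebra of type `ℤ/lℤ`
(Proposition 12(1)): `H_κ ≅ ℂ[z] ⊗ ℂ[ℤ/lℤ] ⊗ ℂ[∂_κ]` as ℂ-vector spaces.  The family
of operators `{Z^a ∘ Γ^b ∘ ∂_κ^c : a, c ∈ ℤ_{≥0}, 0 ≤ b ≤ l−1}` is a basis of `H_κ` as
a ℂ-vector space: it is ℂ-linearly independent in `End_ℂ(L)` and it spans `H_κ`. -/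
theorem pbw_basis_cherednik (l : ℕ) [NeZero l] (ζ : ℂ)
    (hζ : ζ = Complex.exp (2 * Real.pi * Complex.I / l))
    (κ : Fin l → ℂ) (hκ0 : κ 0 = 0) :
    LinearIndependent ℂ (fun p : ℕ × Fin l × ℕ =>
      Zmul ^ p.1 * (Gam ζ) ^ (p.2.1 : ℕ) * (Dunkl l ζ κ) ^ p.2.2) ∧
    Submodule.span ℂ (Set.range (fun p : ℕ × Fin l × ℕ =>
      Zmul ^ p.1 * (Gam ζ) ^ (p.2.1 : ℕ) * (Dunkl l ζ κ) ^ p.2.2)) =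
      Subalgebra.toSubmodule (Cher l ζ κ) :=
  pbw_basis_cherednik_general l ζ hζ κ
end
end

section
/- (Proposition 11, algebraic form.) For every λ ∈ k with λ ≠ −1, the left R-modules M_λ and M_{λ+1} are isomorphic; an isomorphism M_λ → M_{λ+1} is given by v_λ ↦ h^{−1}·ξ·v_{λ+1}, with inverse M_{λ+1} → M_λ given by v_{λ+1} ↦ (λ+1)^{−1}·x·v_λ. -/
/-- Proposition 11 (algebraic form). `k` a field, `R` an associative unital `k`-algebra,
`x, ξ ∈ R`, `h ∈ k` nonzero with `ξx − xξ = h·1`.  For `λ ∈ k`,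
`M_λ = R ⧸ R(xξ − hλ)` with `v_λ` the image of `1`.  For `λ ≠ −1` the left `R`-modules
`M_λ` and `M_{λ+1}` are isomorphic, via `v_λ ↦ h⁻¹ ξ v_{λ+1}` with inverse
`v_{λ+1} ↦ (λ+1)⁻¹ x v_λ`. -/
theorem prop11_algebraic {k : Type*} [Field k] {R : Type*} [Ring R] [Algebra k R]
    (x ξ : R) (h : k) (hh : h ≠ 0) (hrel : ξ * x - x * ξ = h • (1 : R))
    (lam : k) (hlam : lam ≠ -1) :
    ∃ φ : (R ⧸ Ideal.span {x * ξ - (h * lam) • (1 : R)}) ≃ₗ[R]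
        (R ⧸ Ideal.span {x * ξ - (h * (lam + 1)) • (1 : R)}),
      φ (Submodule.Quotient.mk (1 : R)) =
        (h⁻¹ • ξ) • Submodule.Quotient.mk (1 : R) ∧
      φ.symm (Submodule.Quotient.mk (1 : R)) =
        ((lam + 1)⁻¹ • x) • Submodule.Quotient.mk (1 : R) := by
  have hxi : ξ * x = h • (1:R) + x * ξ := sub_eq_iff_eq_add.mp hrel
  set a : R := x * ξ - (h * lam) • (1 : R) with ha
  set b : R := x * ξ - (h * (lam + 1)) • (1 : R) with hb
  have hl1 : lam + 1 ≠ 0 := fun H => hlam (by linear_combination H)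
  have h2 : h + h * lam ≠ 0 := by
    have := mul_ne_zero hh hl1; intro H; exact this (by linear_combination H)
  set c : R := h⁻¹ • ξ with hc
  set d : R := (lam + 1)⁻¹ • x with hd
  have key1 : a * ξ = ξ * b := by
    rw [ha, hb]
    simp only [sub_mul, mul_sub, ← mul_assoc, hxi, smul_mul_assoc, one_mul, mul_smul_comm,
      add_mul, mul_add, mul_one, add_smul]
    module
  have key2 : b * x = x * a := by
    rw [ha, hb]
    simp only [sub_mul, mul_sub, mul_assoc, hxi, smul_mul_assoc, one_mul, mul_smul_comm,
      add_mul, mul_add, mul_one, add_smul]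
    module
  have keycd : c * d = (h * (lam + 1))⁻¹ • (h • (1:R) + x * ξ) := by
    rw [hc, hd, smul_mul_smul_comm, ← hxi, mul_inv]
  have keydc : d * c = (h * (lam + 1))⁻¹ • (x * ξ) := by
    rw [hd, hc, smul_mul_smul_comm, mul_inv, mul_comm h⁻¹]
  have hcd : c * d - 1 = (h * (lam + 1))⁻¹ • a := by
    rw [keycd, ha]
    match_scalars <;> (try field_simp) <;> (try ring)
  have hdc : d * c - 1 = (h * (lam + 1))⁻¹ • b := by
    rw [keydc, hb]
    match_scalars <;> field_simp <;> ring
  set I := Ideal.span {a}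
  set J := Ideal.span {b}
  -- the forward map
  have hkerf : I ≤ LinearMap.ker (J.mkQ ∘ₗ LinearMap.toSpanSingleton R R c) := by
    rw [Ideal.span_le, Set.singleton_subset_iff]
    simp only [SetLike.mem_coe, LinearMap.mem_ker, LinearMap.coe_comp, Function.comp_apply,
      LinearMap.toSpanSingleton_apply, Submodule.mkQ_apply, Submodule.Quotient.mk_eq_zero]
    refine Submodule.mem_span_singleton.mpr ⟨c, ?_⟩
    show c * b = a • c
    rw [hc, smul_mul_assoc, ← key1, smul_eq_mul, mul_smul_comm]
  have hkerg : J ≤ LinearMap.ker (I.mkQ ∘ₗ LinearMap.toSpanSingleton R R d) := by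
    rw [Ideal.span_le, Set.singleton_subset_iff]
    simp only [SetLike.mem_coe, LinearMap.mem_ker, LinearMap.coe_comp, Function.comp_apply,
      LinearMap.toSpanSingleton_apply, Submodule.mkQ_apply, Submodule.Quotient.mk_eq_zero]
    refine Submodule.mem_span_singleton.mpr ⟨d, ?_⟩
    show d * a = b • d
    rw [hd, smul_mul_assoc, ← key2, smul_eq_mul, mul_smul_comm]
  set F := I.liftQ (J.mkQ ∘ₗ LinearMap.toSpanSingleton R R c) hkerf with hF
  set G := J.liftQ (I.mkQ ∘ₗ LinearMap.toSpanSingleton R R d) hkerg with hG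
  have compFG : F.comp G = LinearMap.id := by
    apply Submodule.linearMap_qext
    refine LinearMap.ext fun r => ?_
    simp only [LinearMap.coe_comp, Function.comp_apply, Submodule.mkQ_apply, hF, hG,
      Submodule.liftQ_apply, LinearMap.toSpanSingleton_apply, LinearMap.id_apply]
    rw [Submodule.Quotient.eq]
    refine Submodule.mem_span_singleton.mpr ⟨(h * (lam + 1))⁻¹ • r, ?_⟩
    show ((h * (lam + 1))⁻¹ • r) * b = (r • d) • c - r
    have e : (r • d) • c - r = r * ((h * (lam + 1))⁻¹ • b) := by
      rw [← hdc, smul_eq_mul, smul_eq_mul, mul_assoc, mul_sub, mul_one]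
    rw [e, mul_smul_comm, smul_mul_assoc]
  have compGF : G.comp F = LinearMap.id := by
    apply Submodule.linearMap_qext
    refine LinearMap.ext fun r => ?_
    simp only [LinearMap.coe_comp, Function.comp_apply, Submodule.mkQ_apply, hF, hG,
      Submodule.liftQ_apply, LinearMap.toSpanSingleton_apply, LinearMap.id_apply]
    rw [Submodule.Quotient.eq]
    refine Submodule.mem_span_singleton.mpr ⟨(h * (lam + 1))⁻¹ • r, ?_⟩
    show ((h * (lam + 1))⁻¹ • r) * a = (r • c) • d - r
    have e : (r • c) • d - r = r * ((h * (lam + 1))⁻¹ • a) := by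
      rw [← hcd, smul_eq_mul, smul_eq_mul, mul_assoc, mul_sub, mul_one]
    rw [e, mul_smul_comm, smul_mul_assoc]
  refine ⟨LinearEquiv.ofLinear F G compFG compGF, ?_, ?_⟩
  · show F (Submodule.Quotient.mk 1) = c • Submodule.Quotient.mk (1:R)
    rw [hF]
    show (J.mkQ ∘ₗ LinearMap.toSpanSingleton R R c) 1 = c • Submodule.Quotient.mk (1:R)
    simp only [LinearMap.coe_comp, Function.comp_apply, LinearMap.toSpanSingleton_apply,
      Submodule.mkQ_apply, one_smul]
    rw [← Submodule.Quotient.mk_smul]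
    congr 1
    rw [smul_eq_mul, mul_one]
  · show G (Submodule.Quotient.mk 1) = d • Submodule.Quotient.mk (1:R)
    rw [hG]
    show (I.mkQ ∘ₗ LinearMap.toSpanSingleton R R d) 1 = d • Submodule.Quotient.mk (1:R)
    simp only [LinearMap.coe_comp, Function.comp_apply, LinearMap.toSpanSingleton_apply,
      Submodule.mkQ_apply, one_smul]
    rw [← Submodule.Quotient.mk_smul]
    congr 1
    rw [smul_eq_mul, mul_one]
end

section
/- (Lemma 15, algebraic form: isomorphisms on the locus where x is invertible.) Assume moreover that x is a unit of R. Then for every λ ∈ k and every integer m, the left R-modules M_λ and M_{λ+m} are isomorphic (here λ + m means λ + m·1_k); an isomorphism M_λ → M_{λ+m} is given by v_λ ↦ x^{−m}·v_{λ+m}, with inverse M_{λ+m} → M_λ given by v_{λ+m} ↦ x^{m}·v_λ. -/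
/-!
From `ξ x = x ξ + h` we get `(x ξ) x = x (x ξ + h)`: conjugation by `x` shifts the Euler element
`x ξ` by `h`, hence conjugation by `x ^ n` shifts it by `n h`. Thus right multiplication by the unit
`x ^ (-m)` carries the left ideal `R (x ξ - h λ)` onto `R (x ξ - h (λ + m))`, and so induces the
isomorphism of quotients.
-/

theorem SemiconjBy.units_zpow_add_zsmul {R : Type*} [Ring R] {a t : R} {u : Rˣ}
    (hu : SemiconjBy (u : R) (a + t) a) (ht : Commute (u : R) t) (n : ℤ) :
    SemiconjBy ((u ^ n : Rˣ) : R) (a + n • t) a := by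
  have step (n : ℤ) : SemiconjBy (u : R) (a + (n + 1) • t) (a + n • t) := by
    convert hu.add_right (ht.smul_right n) using 1
    rw [add_zsmul, one_zsmul]
    abel
  induction n using Int.induction_on with
  | zero => simp
  | succ n ih => simpa only [zpow_add_one, Units.val_mul] using ih.mul_left (step n)
  | pred n ih =>
    have back := (step (-n - 1)).units_inv_symm_left
    rw [sub_add_cancel] at back
    simpa only [zpow_sub_one, Units.val_mul] using ih.mul_left back

section

variable {R : Type*} [Ring R] {a b : R}

/-- Right multiplication by `u` carries the left ideal `R a` onto `R a u = R u b = R b`. -/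
def quotSpanSingletonEquivOfSemiconjBy (u : Rˣ) (hu : SemiconjBy (u : R) b a) :
    (R ⧸ Ideal.span {a}) ≃ₗ[R] (R ⧸ Ideal.span {b}) :=
  Submodule.Quotient.equiv _ _ (u.mulRightLinearEquiv R) <| by
    rw [Ideal.span, Submodule.map_span, Set.image_singleton, LinearEquiv.coe_coe,
      Units.mulRightLinearEquiv_apply, ← hu.eq, ← smul_eq_mul,
      Submodule.span_singleton_smul_eq u.isUnit]

theorem quotSpanSingletonEquivOfSemiconjBy_mk (u : Rˣ) (hu : SemiconjBy (u : R) b a) (r : R) :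
    quotSpanSingletonEquivOfSemiconjBy u hu (Submodule.Quotient.mk r) =
      Submodule.Quotient.mk (r * u) :=
  rfl

theorem quotSpanSingletonEquivOfSemiconjBy_symm_mk (u : Rˣ) (hu : SemiconjBy (u : R) b a)
    (r : R) :
    (quotSpanSingletonEquivOfSemiconjBy u hu).symm (Submodule.Quotient.mk r) =
      Submodule.Quotient.mk (r * ↑u⁻¹) :=
  rfl

end

theorem lemma15_algebraic_general {k : Type*} [Field k] {R : Type*} [Ring R] [Algebra k R]
    (x ξ : R) (h : k) (hrel : ξ * x - x * ξ = h • (1 : R))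
    (hx : IsUnit x) (lam : k) (m : ℤ) :
    ∃ φ : (R ⧸ Ideal.span {x * ξ - (h * lam) • (1 : R)}) ≃ₗ[R]
        (R ⧸ Ideal.span {x * ξ - (h * (lam + (m : k))) • (1 : R)}),
      φ (Submodule.Quotient.mk (1 : R)) =
        ((hx.unit ^ (-m) : Rˣ) : R) • Submodule.Quotient.mk (1 : R) ∧
      φ.symm (Submodule.Quotient.mk (1 : R)) =
        ((hx.unit ^ m : Rˣ) : R) • Submodule.Quotient.mk (1 : R) := by
  have central (c : R) (s : k) : Commute c (s • 1) := (Commute.one_right c).smul_right s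
  have shift : SemiconjBy (hx.unit : R) (x * ξ + h • 1) (x * ξ) := by
    rw [SemiconjBy, IsUnit.unit_spec, ← eq_add_of_sub_eq' hrel]
    noncomm_ring
  have conj : SemiconjBy ((hx.unit ^ (-m) : Rˣ) : R)
      (x * ξ - (h * (lam + m)) • 1) (x * ξ - (h * lam) • 1) := by
    convert (shift.units_zpow_add_zsmul (central _ h) (-m)).sub_right (central _ (h * lam)) using 1
    module
  refine ⟨quotSpanSingletonEquivOfSemiconjBy _ conj, ?_, ?_⟩
  · rw [quotSpanSingletonEquivOfSemiconjBy_mk, ← Submodule.Quotient.mk_smul, smul_eq_mul,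
      one_mul, mul_one]
  · rw [quotSpanSingletonEquivOfSemiconjBy_symm_mk, ← Submodule.Quotient.mk_smul, smul_eq_mul,
      one_mul, mul_one, zpow_neg, inv_inv]

/-- Lemma 15 (algebraic form): on the locus where `x` is invertible.
`k` a field, `R` an associative unital `k`-algebra, `x, ξ ∈ R`, `h ∈ k` nonzero with
`ξx − xξ = h·1`, and `x` a unit of `R`.  For `λ ∈ k`,
`M_λ = R ⧸ R(xξ − hλ)` with `v_λ` the image of `1`.  For every `λ` and every integer `m`,
`M_λ ≅ M_{λ+m}` via `v_λ ↦ x^{−m} v_{λ+m}` with inverse `v_{λ+m} ↦ x^m v_λ`. -/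
theorem lemma15_algebraic {k : Type*} [Field k] {R : Type*} [Ring R] [Algebra k R]
    (x ξ : R) (h : k) (hh : h ≠ 0) (hrel : ξ * x - x * ξ = h • (1 : R))
    (hx : IsUnit x) (lam : k) (m : ℤ) :
    ∃ φ : (R ⧸ Ideal.span {x * ξ - (h * lam) • (1 : R)}) ≃ₗ[R]
        (R ⧸ Ideal.span {x * ξ - (h * (lam + (m : k))) • (1 : R)}),
      φ (Submodule.Quotient.mk (1 : R)) =
        ((hx.unit ^ (-m) : Rˣ) : R) • Submodule.Quotient.mk (1 : R) ∧
      φ.symm (Submodule.Quotient.mk (1 : R)) =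
        ((hx.unit ^ m : Rˣ) : R) • Submodule.Quotient.mk (1 : R) :=
  lemma15_algebraic_general x ξ h hrel hx lam m
end

section
/- (Lemma 4: decomposition of a sheaf of modules whose support is a disjoint union.) Suppose Z_1 and Z_2 are disjoint closed subsets of X such that the stalk M_x vanishes for every x ∉ Z_1 ∪ Z_2. For i = 1, 2 define N_i by N_i(U) = {s ∈ M(U) : the germ s_x is 0 for every x ∈ U \ Z_i}. Then N_1 and N_2 are subsheaves of R-modules of M, and the canonical morphism N_1 ⊕ N_2 → M is an isomorphism of sheaves of R-modules. -/
open CategoryTheory TopologicalSpace Opposite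

/-- For a presheaf of abelian groups `M` on a space `X`, a set `Z ⊆ X` and an open `U`,
the set of sections `s ∈ M(U)` whose germ vanishes at every point of `U \ Z`
(i.e. `s` restricts to `0` on a neighbourhood of every such point). -/
def sectionsVanishingOutside {X : TopCat} (M : TopCat.Presheaf AddCommGrpCat X)
    (Z : Set X) (U : Opens X) : Set (M.obj (op U)) :=
  {s | ∀ x ∈ (U : Set X), x ∉ Z →
    ∃ V : Opens X, x ∈ V ∧ ∃ hVU : V ≤ U, M.map (homOfLE hVU).op s = 0}

/-! Since `Z₁` and `Z₂` are disjoint and closed, `U \ Z₂` and `U \ Z₁` are open and cover `U`,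
and their intersection lies outside `Z₁ ∪ Z₂`, where every section is locally zero.
Hence `m` on `U \ Z₂` and `0` on `U \ Z₁` glue to a section `s₁` vanishing off `Z₁`, and
`m - s₁` vanishes off `Z₂`. Uniqueness holds because a section vanishing both off `Z₁` and off
`Z₂` is locally zero everywhere, hence zero. -/

namespace TopCat.Presheaf

variable {X : TopCat} {M : Presheaf AddCommGrpCat X}

/-- `forget AddCommGrpCat` is corepresented by `ℤ`, so this holds with no assumption relating the
universes of `X` and of `M`. -/
theorem isSheaf_comp_forget (hM : M.IsSheaf) :
    Presieve.IsSheaf (Opens.grothendieckTopology X) (M ⋙ forget AddCommGrpCat) :=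
  Presieve.isSheaf_iso _ (Functor.isoWhiskerLeft M AddCommGrpCat.coyonedaObjIsoForget)
    (hM (AddCommGrpCat.of (ULift ℤ)))

theorem map_map_homOfLE {U V W : Opens X} (hWV : W ≤ V) (hVU : V ≤ U) (s : M.obj (op U)) :
    M.map (homOfLE hWV).op (M.map (homOfLE hVU).op s) = M.map (homOfLE (hWV.trans hVU)).op s :=
  restrict_restrict hWV hVU s

def VanishesNear (M : Presheaf AddCommGrpCat X) {U : Opens X} (s : M.obj (op U)) (x : X) :
    Prop :=
  ∃ V : Opens X, x ∈ V ∧ ∃ hVU : V ≤ U, M.map (homOfLE hVU).op s = 0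

namespace VanishesNear

variable {U : Opens X} {s t : M.obj (op U)} {x : X}

theorem zero (hx : x ∈ U) : VanishesNear M (0 : M.obj (op U)) x :=
  ⟨U, hx, le_rfl, map_zero _⟩

theorem add (hs : VanishesNear M s x) (ht : VanishesNear M t x) : VanishesNear M (s + t) x := by
  obtain ⟨V, hxV, hVU, hsV⟩ := hs
  obtain ⟨W, hxW, hWU, htW⟩ := ht
  refine ⟨V ⊓ W, ⟨hxV, hxW⟩, inf_le_left.trans hVU, ?_⟩
  rw [map_add, ← map_map_homOfLE inf_le_left hVU, ← map_map_homOfLE inf_le_right hWU, hsV, htW,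
    map_zero, map_zero, add_zero]

theorem neg (hs : VanishesNear M s x) : VanishesNear M (-s) x := by
  obtain ⟨V, hxV, hVU, hsV⟩ := hs
  exact ⟨V, hxV, hVU, by rw [map_neg, hsV, neg_zero]⟩

theorem smul {R : Presheaf RingCat X} [∀ U, Module (R.obj U) (M.obj U)]
    (hcomp : ∀ {U V : (Opens X)ᵒᵖ} (f : U ⟶ V) (r : R.obj U) (m : M.obj U),
      M.map f (r • m) = R.map f r • M.map f m)
    (r : R.obj (op U)) (hs : VanishesNear M s x) : VanishesNear M (r • s) x := by
  obtain ⟨V, hxV, hVU, hsV⟩ := hs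
  exact ⟨V, hxV, hVU, by rw [hcomp, hsV, smul_zero]⟩

theorem map {W : Opens X} (hWU : W ≤ U) (hs : VanishesNear M s x) (hx : x ∈ W) :
    VanishesNear M (M.map (homOfLE hWU).op s) x := by
  obtain ⟨V, hxV, hVU, hsV⟩ := hs
  refine ⟨V ⊓ W, ⟨hxV, hx⟩, inf_le_right, ?_⟩
  rw [map_map_homOfLE, ← map_map_homOfLE inf_le_left hVU, hsV, map_zero]

end VanishesNear

theorem eq_zero_of_forall_vanishesNear (hM : M.IsSheaf) {U : Opens X} {s : M.obj (op U)}
    (h : ∀ x ∈ U, VanishesNear M s x) : s = 0 := by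
  let S : Sieve U :=
    { arrows := fun _ f => M.map f.op s = 0
      downward_closed := fun {_ _} f hf g => by
        simp only [op_comp, Functor.map_comp, ConcreteCategory.comp_apply, hf, map_zero] }
  have hS : S ∈ Opens.grothendieckTopology X U := fun x hx =>
    let ⟨V, hxV, hVU, hV⟩ := h x hx
    ⟨V, homOfLE hVU, hV, hxV⟩
  exact (isSheaf_comp_forget hM S hS).isSeparatedFor.ext fun V f hf =>
    hf.trans (map_zero (M.map f.op).hom).symm

theorem exists_map_eq_and_map_eq_zero (hM : M.IsSheaf) {A B U : Opens X} (hA : A ≤ U)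
    (hB : B ≤ U) (hU : U ≤ A ⊔ B) (s : M.obj (op A))
    (hs : M.map (homOfLE (inf_le_left : A ⊓ B ≤ A)).op s = 0) :
    ∃ t : M.obj (op U), M.map (homOfLE hA).op t = s ∧ M.map (homOfLE hB).op t = 0 := by
  let W : Bool → Opens X := fun b => cond b A B
  let sf : ∀ b, M.obj (op (W b)) := fun | true => s | false => 0
  let F : Presheaf (Type _) X := M ⋙ forget AddCommGrpCat
  have hF : F.IsSheaf := (isSheaf_iff_isSheaf_of_type _ _).2 (isSheaf_comp_forget hM)
  have hsf : IsCompatible F W sf := by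
    rintro (_ | _) (_ | _)
    · rfl
    · change M.map (homOfLE inf_le_left).op (0 : M.obj (op B)) = M.map (homOfLE inf_le_right).op s
      rw [map_zero, ← map_map_homOfLE (inf_comm B A).le inf_le_left, hs, map_zero]
    · change M.map (homOfLE inf_le_left).op s = M.map (homOfLE inf_le_right).op (0 : M.obj (op B))
      rw [hs, map_zero]
    · rfl
  obtain ⟨t, ht, -⟩ := hF.isSheafUniqueGluing_types sf hsf
  have hUW : U ≤ iSup W := hU.trans (sup_eq_iSup A B).le
  exact ⟨M.map (homOfLE hUW).op t, (map_map_homOfLE hA hUW t).trans (ht true),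
    (map_map_homOfLE hB hUW t).trans (ht false)⟩

end TopCat.Presheaf

open TopCat.Presheaf

section VanishingOutside

variable {X : TopCat} {M : TopCat.Presheaf AddCommGrpCat X}

def vanishingOutside (M : TopCat.Presheaf AddCommGrpCat X) (Z : Set X) (U : Opens X) :
    AddSubgroup (M.obj (op U)) where
  carrier := sectionsVanishingOutside M Z U
  zero_mem' _ hx _ := VanishesNear.zero hx
  add_mem' hs ht x hx hxZ := VanishesNear.add (hs x hx hxZ) (ht x hx hxZ)
  neg_mem' hs x hx hxZ := VanishesNear.neg (hs x hx hxZ)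

theorem smul_mem_sectionsVanishingOutside {R : TopCat.Presheaf RingCat X}
    [∀ U, Module (R.obj U) (M.obj U)]
    (hcomp : ∀ {U V : (Opens X)ᵒᵖ} (f : U ⟶ V) (r : R.obj U) (m : M.obj U),
      M.map f (r • m) = R.map f r • M.map f m)
    {Z : Set X} {U : Opens X} (r : R.obj (op U)) {s : M.obj (op U)}
    (hs : s ∈ sectionsVanishingOutside M Z U) : r • s ∈ sectionsVanishingOutside M Z U :=
  fun x hx hxZ => VanishesNear.smul hcomp r (hs x hx hxZ)

theorem map_mem_sectionsVanishingOutside {Z : Set X} {U V : Opens X} (hVU : V ≤ U)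
    {s : M.obj (op U)} (hs : s ∈ sectionsVanishingOutside M Z U) :
    M.map (homOfLE hVU).op s ∈ sectionsVanishingOutside M Z V :=
  fun x hx hxZ => VanishesNear.map hVU (hs x (hVU hx) hxZ) hx

theorem disjoint_vanishingOutside (hM : M.IsSheaf) {Z₁ Z₂ : Set X} (h : Disjoint Z₁ Z₂)
    (U : Opens X) : Disjoint (vanishingOutside M Z₁ U) (vanishingOutside M Z₂ U) := by
  refine AddSubgroup.disjoint_def.2 fun {s} hs₁ hs₂ => eq_zero_of_forall_vanishesNear hM ?_
  intro x hx
  by_cases hxZ₁ : x ∈ Z₁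
  · exact hs₂ x hx (Set.disjoint_left.1 h hxZ₁)
  · exact hs₁ x hx hxZ₁

theorem exists_add_eq_of_mem_sectionsVanishingOutside_union (hM : M.IsSheaf) {Z₁ Z₂ : Set X}
    (hZ₁ : IsClosed Z₁) (hZ₂ : IsClosed Z₂) (h : Disjoint Z₁ Z₂) {U : Opens X}
    {m : M.obj (op U)} (hm : m ∈ sectionsVanishingOutside M (Z₁ ∪ Z₂) U) :
    ∃ s₁ ∈ sectionsVanishingOutside M Z₁ U, ∃ s₂ ∈ sectionsVanishingOutside M Z₂ U,
      s₁ + s₂ = m := by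
  let W₁ : Opens X := U ⊓ ⟨Z₂ᶜ, hZ₂.isOpen_compl⟩
  let W₂ : Opens X := U ⊓ ⟨Z₁ᶜ, hZ₁.isOpen_compl⟩
  have hcover : U ≤ W₁ ⊔ W₂ := by
    intro x hx
    by_cases hxZ₁ : x ∈ Z₁
    · exact Or.inl ⟨hx, Set.disjoint_left.1 h hxZ₁⟩
    · exact Or.inr ⟨hx, hxZ₁⟩
  have hm₀ : M.map (homOfLE (inf_le_left : W₁ ⊓ W₂ ≤ W₁)).op
      (M.map (homOfLE (inf_le_left : W₁ ≤ U)).op m) = 0 := by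
    rw [map_map_homOfLE]
    refine eq_zero_of_forall_vanishesNear hM fun x hx => VanishesNear.map _ (hm x hx.1.1 ?_) hx
    rintro (hxZ₁ | hxZ₂)
    exacts [hx.2.2 hxZ₁, hx.1.2 hxZ₂]
  obtain ⟨s₁, hs₁W₁, hs₁W₂⟩ :=
    exists_map_eq_and_map_eq_zero hM inf_le_left inf_le_left hcover _ hm₀
  refine ⟨s₁, fun x hx hxZ => ⟨W₂, ⟨hx, hxZ⟩, inf_le_left, hs₁W₂⟩, m - s₁,
    fun x hx hxZ => ⟨W₁, ⟨hx, hxZ⟩, inf_le_left, ?_⟩, add_sub_cancel s₁ m⟩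
  rw [map_sub, hs₁W₁, sub_self]

end VanishingOutside

theorem decomposition_disjoint_support_general {X : TopCat}
    (R : TopCat.Presheaf RingCat X) (M : TopCat.Presheaf AddCommGrpCat X)
    (hM : M.IsSheaf)
    (inst : ∀ U : (Opens X)ᵒᵖ, Module (R.obj U) (M.obj U))
    (hcomp : ∀ {U V : (Opens X)ᵒᵖ} (f : U ⟶ V) (r : R.obj U) (m : M.obj U),
      M.map f (r • m) = R.map f r • M.map f m)
    (Z₁ Z₂ : Set X) (hZ₁ : IsClosed Z₁) (hZ₂ : IsClosed Z₂) (hdisj : Disjoint Z₁ Z₂)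
    (hstalk : ∀ (U : Opens X) (s : M.obj (op U)) (x : X), x ∈ (U : Set X) →
      x ∉ Z₁ ∪ Z₂ →
      ∃ V : Opens X, x ∈ V ∧ ∃ hVU : V ≤ U, M.map (homOfLE hVU).op s = 0) :
    (∀ Z ∈ ({Z₁, Z₂} : Set (Set X)), ∀ U : Opens X,
      (0 : M.obj (op U)) ∈ sectionsVanishingOutside M Z U ∧
      (∀ s t : M.obj (op U), s ∈ sectionsVanishingOutside M Z U →
        t ∈ sectionsVanishingOutside M Z U →
        s + t ∈ sectionsVanishingOutside M Z U) ∧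
      (∀ (r : R.obj (op U)) (s : M.obj (op U)), s ∈ sectionsVanishingOutside M Z U →
        r • s ∈ sectionsVanishingOutside M Z U)) ∧
    (∀ Z ∈ ({Z₁, Z₂} : Set (Set X)), ∀ (U V : Opens X) (hVU : V ≤ U)
        (s : M.obj (op U)), s ∈ sectionsVanishingOutside M Z U →
      M.map (homOfLE hVU).op s ∈ sectionsVanishingOutside M Z V) ∧
    (∀ (U : Opens X) (m : M.obj (op U)),
      ∃! p : (sectionsVanishingOutside M Z₁ U) × (sectionsVanishingOutside M Z₂ U),
        (p.1 : M.obj (op U)) + (p.2 : M.obj (op U)) = m) := by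
  refine ⟨fun Z _ U => ⟨(vanishingOutside M Z U).zero_mem,
      fun _ _ => (vanishingOutside M Z U).add_mem,
      fun r _ => smul_mem_sectionsVanishingOutside hcomp r⟩,
    fun Z _ U V hVU _ => map_mem_sectionsVanishingOutside hVU, fun U m => ?_⟩
  obtain ⟨s₁, hs₁, s₂, hs₂, rfl⟩ :=
    exists_add_eq_of_mem_sectionsVanishingOutside_union hM hZ₁ hZ₂ hdisj (hstalk U m)
  exact ⟨(⟨s₁, hs₁⟩, ⟨s₂, hs₂⟩), rfl,
    fun p hp => AddSubgroup.add_injective_of_disjoint (disjoint_vanishingOutside hM hdisj U) hp⟩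

/-- Lemma 4: decomposition of a sheaf of modules whose support is a disjoint union.
Let `X` be a topological space, `R` a sheaf of rings on `X` and `M` a sheaf of left
`R`-modules (given by a sheaf of abelian groups with compatible `R(U)`-module structures
on the sections).  Suppose `Z₁`, `Z₂` are disjoint closed subsets such that every stalk
`M_x` for `x ∉ Z₁ ∪ Z₂` vanishes (every germ at such `x` vanishes).  Define
`Nᵢ(U) = {s ∈ M(U) : s_x = 0 for every x ∈ U \ Zᵢ}`.  Then `N₁` and `N₂` are subsheaves
of `R`-modules of `M` (each `Nᵢ(U)` is an `R(U)`-submodule, stable under restriction),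
and the canonical morphism `N₁ ⊕ N₂ → M` is an isomorphism (sectionwise bijective). -/
theorem decomposition_disjoint_support {X : TopCat}
    (R : TopCat.Presheaf RingCat X) (M : TopCat.Presheaf AddCommGrpCat X)
    (hR : R.IsSheaf) (hM : M.IsSheaf)
    (inst : ∀ U : (Opens X)ᵒᵖ, Module (R.obj U) (M.obj U))
    (hcomp : ∀ {U V : (Opens X)ᵒᵖ} (f : U ⟶ V) (r : R.obj U) (m : M.obj U),
      M.map f (r • m) = R.map f r • M.map f m)
    (Z₁ Z₂ : Set X) (hZ₁ : IsClosed Z₁) (hZ₂ : IsClosed Z₂) (hdisj : Disjoint Z₁ Z₂)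
    (hstalk : ∀ (U : Opens X) (s : M.obj (op U)) (x : X), x ∈ (U : Set X) →
      x ∉ Z₁ ∪ Z₂ →
      ∃ V : Opens X, x ∈ V ∧ ∃ hVU : V ≤ U, M.map (homOfLE hVU).op s = 0) :
    (∀ Z ∈ ({Z₁, Z₂} : Set (Set X)), ∀ U : Opens X,
      (0 : M.obj (op U)) ∈ sectionsVanishingOutside M Z U ∧
      (∀ s t : M.obj (op U), s ∈ sectionsVanishingOutside M Z U →
        t ∈ sectionsVanishingOutside M Z U →
        s + t ∈ sectionsVanishingOutside M Z U) ∧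
      (∀ (r : R.obj (op U)) (s : M.obj (op U)), s ∈ sectionsVanishingOutside M Z U →
        r • s ∈ sectionsVanishingOutside M Z U)) ∧
    (∀ Z ∈ ({Z₁, Z₂} : Set (Set X)), ∀ (U V : Opens X) (hVU : V ≤ U)
        (s : M.obj (op U)), s ∈ sectionsVanishingOutside M Z U →
      M.map (homOfLE hVU).op s ∈ sectionsVanishingOutside M Z V) ∧
    (∀ (U : Opens X) (m : M.obj (op U)),
      ∃! p : (sectionsVanishingOutside M Z₁ U) × (sectionsVanishingOutside M Z₂ U),
        (p.1 : M.obj (op U)) + (p.2 : M.obj (op U)) = m) :=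
  decomposition_disjoint_support_general R M hM inst hcomp Z₁ Z₂ hZ₁ hZ₂ hdisj hstalk
end

section
/- (The relation ⊳ defined by the stability parameter is a total ordering.) Suppose Σ_{k∈ℤ/lℤ} θ_k = 0 and S_θ(i,j) ≠ 0 for all distinct i, j ∈ ℤ/lℤ. Define i ⊳ j if and only if S_θ(i,j) < 0. Then ⊳ is a strict total order on ℤ/lℤ: for all distinct i, j exactly one of i ⊳ j and j ⊳ i holds, and ⊳ is transitive (i ⊳ j and j ⊳ k imply i ⊳ k). -/
/-- The cyclic partial sum `S_θ(i,j) = θ_i + θ_{i+1} + ⋯ + θ_{j−1}`: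
the sum of `θ` over the cyclic interval from `i` to `j−1`, i.e.
`S_θ(i,j) = Σ_{k=0}^{d−1} θ_{i+k}` where `d = (j−i).val` (for `i ≠ j` this is the unique
`d` with `1 ≤ d ≤ l−1` and `j = i + d` in `ℤ/lℤ`). -/
def cyclicSum {l : ℕ} {M : Type*} [AddCommMonoid M] (f : ZMod l → M) (i j : ZMod l) : M :=
  ∑ m ∈ Finset.range ((j - i).val), f (i + (m : ZMod l))

lemma sum_full (l : ℕ) [NeZero l] (θ : ZMod l → ℤ) (i : ZMod l) :
    ∑ m ∈ Finset.range l, θ (i + (m : ZMod l)) = ∑ k : ZMod l, θ k := by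
  refine Finset.sum_nbij' (fun m => i + (m : ZMod l)) (fun x => (x - i).val) ?_ ?_ ?_ ?_ ?_
  · intro a _; exact Finset.mem_univ _
  · intro a _; exact Finset.mem_range.mpr (ZMod.val_lt _)
  · intro a ha
    simp only [add_sub_cancel_left, ZMod.val_natCast]
    exact Nat.mod_eq_of_lt (Finset.mem_range.mp ha)
  · intro a _
    simp [ZMod.natCast_val, ZMod.cast_id]
  · intro a _; rfl

lemma cyclicSum_add (l : ℕ) [NeZero l] (θ : ZMod l → ℤ)
    (hsum : ∑ k : ZMod l, θ k = 0) (i j k : ZMod l) :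
    cyclicSum θ i j + cyclicSum θ j k = cyclicSum θ i k := by
  set d1 := (j - i).val with hd1
  set d2 := (k - j).val with hd2
  set d3 := (k - i).val with hd3
  have hij : i + (d1 : ZMod l) = j := by
    rw [hd1, ZMod.natCast_val, ZMod.cast_id, add_sub_cancel]
  have hik : i + (d3 : ZMod l) = k := by
    rw [hd3, ZMod.natCast_val, ZMod.cast_id, add_sub_cancel]
  have h2 : cyclicSum θ j k = ∑ m ∈ Finset.range d2, θ (i + ((d1 + m : ℕ) : ZMod l)) := by
    unfold cyclicSum
    apply Finset.sum_congr rfl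
    intro m _
    rw [Nat.cast_add, ← add_assoc, hij]
  have hsplit : cyclicSum θ i j + cyclicSum θ j k
      = ∑ m ∈ Finset.range (d1 + d2), θ (i + (m : ZMod l)) := by
    rw [h2, Finset.sum_range_add]; rfl
  have hmod : d3 = (d1 + d2) % l := by
    have : ((d1 + d2 : ℕ) : ZMod l) = ((d3 : ℕ) : ZMod l) := by
      push_cast
      rw [hd1, hd2, hd3, ZMod.natCast_val, ZMod.natCast_val, ZMod.natCast_val,
        ZMod.cast_id, ZMod.cast_id, ZMod.cast_id]
      ring
    have := congrArg ZMod.val this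
    rwa [ZMod.val_natCast, ZMod.val_natCast, Nat.mod_eq_of_lt (ZMod.val_lt _), eq_comm] at this
  rcases lt_or_ge (d1 + d2) l with h | h
  · have hd : d1 + d2 = d3 := by rw [hmod]; exact (Nat.mod_eq_of_lt h).symm
    rw [hsplit, hd]; rfl
  · have hlt : d1 + d2 < 2 * l := by
      have := ZMod.val_lt (j - i); have := ZMod.val_lt (k - j); omega
    have heq : d1 + d2 = d3 + l := by
      have : (d1 + d2) % l = d1 + d2 - l := by
        rw [Nat.mod_eq_sub_mod h, Nat.mod_eq_of_lt (by omega)]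
      omega
    rw [hsplit, heq, Finset.sum_range_add]
    have : ∑ m ∈ Finset.range l, θ (i + ((d3 + m : ℕ) : ZMod l)) = 0 := by
      rw [← hsum, ← sum_full l θ k]
      apply Finset.sum_congr rfl
      intro m _
      rw [Nat.cast_add, ← add_assoc, hik]
    rw [this, add_zero]; rfl

/-- The relation `⊳` defined by the stability parameter is a total ordering:
if `Σ θ_k = 0` and `S_θ(i,j) ≠ 0` for all distinct `i, j`, and `i ⊳ j ↔ S_θ(i,j) < 0`,
then for all distinct `i, j` exactly one of `i ⊳ j`, `j ⊳ i` holds, and `⊳` is transitive. -/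
theorem order_is_total (l : ℕ) [NeZero l] (θ : ZMod l → ℤ)
    (hsum : ∑ k : ZMod l, θ k = 0)
    (hne : ∀ i j : ZMod l, i ≠ j → cyclicSum θ i j ≠ 0) :
    (∀ i j : ZMod l, i ≠ j → Xor' (cyclicSum θ i j < 0) (cyclicSum θ j i < 0)) ∧
    (∀ i j k : ZMod l, cyclicSum θ i j < 0 → cyclicSum θ j k < 0 →
      cyclicSum θ i k < 0) := by
  have hself : ∀ i : ZMod l, cyclicSum θ i i = 0 := by
    intro i; unfold cyclicSum; simp
  constructor
  · intro i j hij
    have h0 : cyclicSum θ i j + cyclicSum θ j i = 0 := by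
      rw [cyclicSum_add l θ hsum i j i, hself]
    have h1 := hne i j hij
    have h2 := hne j i (Ne.symm hij)
    rcases lt_or_gt_of_ne h1 with h | h
    · exact Or.inl ⟨h, by omega⟩
    · exact Or.inr ⟨by omega, by omega⟩
  · intro i j k h1 h2
    have := cyclicSum_add l θ hsum i j k
    omega
end

section
/- (Lemma 1, part 1: the candidate fixed point lies in the zero fibre of the moment map and is θ-semistable.) Fix i ∈ ℤ/lℤ and define (a,b) by: a_i = b_i = 0; for j ≠ i, (a_j, b_j) = (0,1) if S_θ(i,j) < 0 and (a_j, b_j) = (1,0) if S_θ(i,j) > 0. Then a_j·b_j = 0 for all j (hence a_{j+1}b_{j+1} − a_jb_j = 0 for all j, so (a,b) lies in the zero fibre of the moment map), and (a,b) is θ-semistable. -/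
/-- A representation `(a, b)` of the doubled cyclic quiver with dimension vector `(1,…,1)`
is `θ`-semistable if every subset `S ⊆ ℤ/lℤ` which is stable under the action of `(a,b)`
(i.e. `j−1 ∈ S` and `a_j ≠ 0` imply `j ∈ S`; `j ∈ S` and `b_j ≠ 0` imply `j−1 ∈ S`)
satisfies `Σ_{k∈S} θ_k ≤ 0`. -/
def IsThetaSemistable (l : ℕ) [NeZero l] (θ : ZMod l → ℤ) (a b : ZMod l → ℂ) : Prop :=
  ∀ S : Finset (ZMod l),
    (∀ j : ZMod l, j - 1 ∈ S → a j ≠ 0 → j ∈ S) →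
    (∀ j : ZMod l, j ∈ S → b j ≠ 0 → j - 1 ∈ S) →
    ∑ k ∈ S, θ k ≤ 0

/-!
`f := S_θ(i, ·)` is a potential for `θ`: since `Σ θ = 0`, `θ_k = f(k+1) - f(k)` for every `k`.
Hence for any subset `S`, `Σ_{k∈S} θ_k = Σ_{(S+1)∖S} f - Σ_{S∖(S+1)} f`. If `S` is stable, a
vertex `j ∈ (S+1)∖S` has `a_j = 0`, so `f(j) ≤ 0` by construction of `a`, and a vertex
`j ∈ S∖(S+1)` has `b_j = 0`, so `f(j) ≥ 0`.
-/

open Finset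

section CyclicSum

variable {l : ℕ} {M : Type*}

lemma sum_range_natCast_add [NeZero l] [AddCommMonoid M] (f : ZMod l → M) (i : ZMod l) :
    ∑ m ∈ range l, f (i + m) = ∑ k, f k := by
  refine sum_nbij' (fun m => i + m) (fun k => (k - i).val) (fun _ _ => mem_univ _)
    (fun k _ => mem_range.2 (ZMod.val_lt _)) (fun m hm => ?_) (fun k _ => ?_) (fun _ _ => rfl)
  · simpa using ZMod.val_cast_of_lt (mem_range.1 hm)
  · simp

@[simp]
lemma cyclicSum_self [AddCommMonoid M] (f : ZMod l → M) (i : ZMod l) : cyclicSum f i i = 0 := by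
  simp [cyclicSum]

lemma cyclicSum_add_one [NeZero l] [AddCommMonoid M] {f : ZMod l → M} (hf : ∑ k, f k = 0)
    (i j : ZMod l) : cyclicSum f i (j + 1) = cyclicSum f i j + f j := by
  have hlt : (j - i).val + 1 ≤ l := ZMod.val_lt (j - i)
  have hcast : (((j - i).val + 1 : ℕ) : ZMod l) = j + 1 - i := by
    push_cast [ZMod.natCast_zmod_val]; ring
  calc cyclicSum f i (j + 1) = ∑ m ∈ range ((j - i).val + 1), f (i + m) := by
        rcases hlt.lt_or_eq with hlt | heq
        · rw [cyclicSum, ← hcast, ZMod.val_cast_of_lt hlt]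
        · -- the interval wraps around once: `j + 1 = i`
          rw [heq, ZMod.natCast_self, eq_comm, sub_eq_zero] at hcast
          rw [heq, sum_range_natCast_add, hf, hcast, cyclicSum_self]
    _ = cyclicSum f i j + f j := by
        rw [sum_range_succ, ZMod.natCast_zmod_val, add_sub_cancel, cyclicSum]

lemma cyclicSum_add_one_sub [NeZero l] [AddCommGroup M] {f : ZMod l → M} (hf : ∑ k, f k = 0)
    (i k : ZMod l) : cyclicSum f i (k + 1) - cyclicSum f i k = f k := by
  rw [cyclicSum_add_one hf, add_sub_cancel_left]

end CyclicSum

section Shift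

variable {G M : Type*} [AddGroup G] [DecidableEq G] [AddCommGroup M]

lemma sum_sub_comp_add_right (g : G → M) (c : G) (S : Finset G) :
    ∑ k ∈ S, (g (k + c) - g k) =
      ∑ j ∈ S.map (Equiv.addRight c).toEmbedding \ S, g j -
        ∑ j ∈ S \ S.map (Equiv.addRight c).toEmbedding, g j := by
  set T := S.map (Equiv.addRight c).toEmbedding
  have hT : ∑ k ∈ S, g (k + c) = ∑ j ∈ T, g j := by rw [sum_map]; rfl
  rw [sum_sub_distrib, hT, ← sum_inter_add_sum_sdiff T S, ← sum_inter_add_sum_sdiff S T,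
    inter_comm, add_sub_add_left_eq_sub]

lemma sum_sub_comp_add_right_nonpos [PartialOrder M] [IsOrderedAddMonoid M] (g : G → M)
    (c : G) (S : Finset G) (hin : ∀ j, j - c ∈ S → j ∉ S → g j ≤ 0)
    (hout : ∀ j ∈ S, j - c ∉ S → 0 ≤ g j) :
    ∑ k ∈ S, (g (k + c) - g k) ≤ 0 := by
  have hmem : ∀ j, j ∈ S.map (Equiv.addRight c).toEmbedding ↔ j - c ∈ S := fun j => by
    simp [Equiv.addRight, sub_eq_add_neg]
  rw [sum_sub_comp_add_right, sub_nonpos]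
  refine (sum_nonpos fun j hj => ?_).trans (sum_nonneg fun j hj => ?_)
  · rw [mem_sdiff, hmem] at hj
    exact hin j hj.1 hj.2
  · rw [mem_sdiff, hmem] at hj
    exact hout j hj.1 hj.2

end Shift

theorem fixed_point_semistable_general (l : ℕ) [NeZero l]
    (θ : ZMod l → ℤ) (hsum : ∑ k : ZMod l, θ k = 0)
    (hne : ∀ i j : ZMod l, i ≠ j → cyclicSum θ i j ≠ 0)
    (i : ZMod l) (a b : ZMod l → ℂ)
    (hai : a i = 0)
    (hneg : ∀ j : ZMod l, j ≠ i → cyclicSum θ i j < 0 → a j = 0 ∧ b j = 1)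
    (hpos : ∀ j : ZMod l, j ≠ i → 0 < cyclicSum θ i j → a j = 1 ∧ b j = 0) :
    (∀ j : ZMod l, a j * b j = 0) ∧
    (∀ j : ZMod l, a (j + 1) * b (j + 1) - a j * b j = 0) ∧
    IsThetaSemistable l θ a b := by
  have hab : ∀ j, a j * b j = 0 := fun j => by
    rcases eq_or_ne j i with rfl | hji
    · rw [hai, zero_mul]
    rcases (hne i j hji.symm).lt_or_gt with h | h
    · rw [(hneg j hji h).1, zero_mul]
    · rw [(hpos j hji h).2, mul_zero]
  refine ⟨hab, fun j => by rw [hab, hab, sub_zero], fun S hSa hSb => ?_⟩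
  have hin : ∀ j, j - 1 ∈ S → j ∉ S → cyclicSum θ i j ≤ 0 := fun j hj hjS =>
    not_lt.1 fun hpos_j => by
      have hji : j ≠ i := by rintro rfl; simp at hpos_j
      exact hjS (hSa j hj (by simp [(hpos j hji hpos_j).1]))
  have hout : ∀ j ∈ S, j - 1 ∉ S → 0 ≤ cyclicSum θ i j := fun j hj hjS =>
    not_lt.1 fun hneg_j => by
      have hji : j ≠ i := by rintro rfl; simp at hneg_j
      exact hjS (hSb j hj (by simp [(hneg j hji hneg_j).2]))
  simpa only [cyclicSum_add_one_sub hsum] using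
    sum_sub_comp_add_right_nonpos (cyclicSum θ i) 1 S hin hout

/-- Lemma 1, part 1: the candidate fixed point lies in the zero fibre of the moment map
and is `θ`-semistable. -/
theorem fixed_point_semistable (l : ℕ) [NeZero l] (hl : 2 ≤ l)
    (θ : ZMod l → ℤ) (hsum : ∑ k : ZMod l, θ k = 0)
    (hne : ∀ i j : ZMod l, i ≠ j → cyclicSum θ i j ≠ 0)
    (i : ZMod l) (a b : ZMod l → ℂ)
    (hai : a i = 0) (hbi : b i = 0)
    (hneg : ∀ j : ZMod l, j ≠ i → cyclicSum θ i j < 0 → a j = 0 ∧ b j = 1)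
    (hpos : ∀ j : ZMod l, j ≠ i → 0 < cyclicSum θ i j → a j = 1 ∧ b j = 0) :
    (∀ j : ZMod l, a j * b j = 0) ∧
    (∀ j : ZMod l, a (j + 1) * b (j + 1) - a j * b j = 0) ∧
    IsThetaSemistable l θ a b :=
  fixed_point_semistable_general l θ hsum hne i a b hai hneg hpos
end

section
/- (Lemma 1, part 2: the candidate fixed point is fixed by the torus action modulo the gauge group.) Fix i ∈ ℤ/lℤ and define (a,b) by: a_i = b_i = 0; for j ≠ i, (a_j, b_j) = (0,1) if S_θ(i,j) < 0 and (a_j, b_j) = (1,0) if S_θ(i,j) > 0. Then for every (q_1, q_2) ∈ (ℂ^×)² there exists t : ℤ/lℤ → ℂ^× such that for all j ∈ ℤ/lℤ: q_1·t_j·t_{j−1}^{−1}·a_j = a_j and q_2·t_{j−1}·t_j^{−1}·b_j = b_j; that is, the rescaled representation (q_1·a, q_2·b) lies in the same gauge-group orbit as (a,b). -/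
/-- Auxiliary gauge transformation defined recursively along the cycle starting at `i`. -/
noncomputable def auxU {l : ℕ} (a b : ZMod l → ℂ) (q₁ q₂ : ℂˣ) (i : ZMod l) : ℕ → ℂˣ
  | 0 => 1
  | n + 1 =>
      if a (i + ((n + 1 : ℕ) : ZMod l)) = 0 then
        (if b (i + ((n + 1 : ℕ) : ZMod l)) = 0 then auxU a b q₁ q₂ i n
         else q₂ * auxU a b q₁ q₂ i n)
      else auxU a b q₁ q₂ i n * q₁⁻¹

lemma auxU_succ {l : ℕ} (a b : ZMod l → ℂ) (q₁ q₂ : ℂˣ) (i : ZMod l) (n : ℕ) :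
    auxU a b q₁ q₂ i (n + 1) =
      if a (i + ((n + 1 : ℕ) : ZMod l)) = 0 then
        (if b (i + ((n + 1 : ℕ) : ZMod l)) = 0 then auxU a b q₁ q₂ i n
         else q₂ * auxU a b q₁ q₂ i n)
      else auxU a b q₁ q₂ i n * q₁⁻¹ := by
  rfl

/-- Lemma 1, part 2: the candidate fixed point is fixed by the torus action modulo the
gauge group.  For every `(q₁, q₂) ∈ (ℂ^×)²` there exists `t : ℤ/lℤ → ℂ^×` such that
`q₁ t_j t_{j−1}⁻¹ a_j = a_j` and `q₂ t_{j−1} t_j⁻¹ b_j = b_j` for all `j`, i.e. the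
rescaled representation `(q₁·a, q₂·b)` lies in the same gauge-group orbit as `(a,b)`. -/
theorem fixed_point_torus_fixed (l : ℕ) [NeZero l] (hl : 2 ≤ l)
    (θ : ZMod l → ℤ) (hsum : ∑ k : ZMod l, θ k = 0)
    (hne : ∀ i j : ZMod l, i ≠ j → cyclicSum θ i j ≠ 0)
    (i : ZMod l) (a b : ZMod l → ℂ)
    (hai : a i = 0) (hbi : b i = 0)
    (hneg : ∀ j : ZMod l, j ≠ i → cyclicSum θ i j < 0 → a j = 0 ∧ b j = 1)
    (hpos : ∀ j : ZMod l, j ≠ i → 0 < cyclicSum θ i j → a j = 1 ∧ b j = 0) :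
    ∀ q₁ q₂ : ℂˣ, ∃ t : ZMod l → ℂˣ, ∀ j : ZMod l,
      (q₁ : ℂ) * (t j : ℂ) * ((t (j - 1))⁻¹ : ℂˣ) * a j = a j ∧
      (q₂ : ℂ) * (t (j - 1) : ℂ) * ((t j)⁻¹ : ℂˣ) * b j = b j := by
  intro q₁ q₂
  set u := auxU a b q₁ q₂ i with hu
  refine ⟨fun j => u ((j - i).val), fun j => ?_⟩
  by_cases hji : j = i
  · subst hji; simp [hai, hbi]
  · have hji' : j - i ≠ 0 := sub_ne_zero.mpr hji
    have hk : (j - i).val ≠ 0 := by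
      simpa [ZMod.val_eq_zero] using hji'
    obtain ⟨n, hn⟩ : ∃ n, (j - i).val = n + 1 := ⟨(j - i).val - 1, by omega⟩
    have hnl : n < l := by
      have := ZMod.val_lt (j - i); omega
    have hcast : ((n + 1 : ℕ) : ZMod l) = j - i := by
      rw [← hn, ZMod.natCast_val, ZMod.cast_id]
    have hj : i + ((n + 1 : ℕ) : ZMod l) = j := by rw [hcast]; ring
    have hj1 : ((j - 1) - i).val = n := by
      have h2 : (j - 1) - i = (n : ZMod l) := by
        have h3 : ((n : ZMod l)) = ((n + 1 : ℕ) : ZMod l) - 1 := by push_cast; ring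
        rw [h3, hcast]; ring
      rw [h2, ZMod.val_cast_of_lt hnl]
    have htj : u ((j - i).val) =
        if a j = 0 then (if b j = 0 then u n else q₂ * u n) else u n * q₁⁻¹ := by
      rw [hn, hu, auxU_succ, hj]
    simp only [hj1, htj]
    by_cases ha0 : a j = 0
    · rw [if_pos ha0]
      by_cases hb0 : b j = 0
      · simp [ha0, hb0]
      · rw [if_neg hb0]
        constructor
        · simp [ha0]
        · have : (q₂ : ℂ) * (u n : ℂ) * ((q₂ * u n)⁻¹ : ℂˣ) = 1 := by
            rw [mul_inv]
            push_cast
            field_simp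
          rw [this, one_mul]
    · rw [if_neg ha0]
      have hb0 : b j = 0 := by
        rcases lt_or_gt_of_ne (hne i j (Ne.symm hji)) with h | h
        · exact absurd (hneg j hji h).1 ha0
        · exact (hpos j hji h).2
      constructor
      · have : (q₁ : ℂ) * ((u n * q₁⁻¹ : ℂˣ) : ℂ) * ((u n)⁻¹ : ℂˣ) = 1 := by
          push_cast
          field_simp
        rw [this, one_mul]
      · simp [hb0]
end

section
/- (The affine quiver variety X_0 is the Kleinian singularity of type A_{l−1}: algebraic content of the isomorphism X_0 ≅ ℂ²/(ℤ/lℤ).) The map (a,b) ↦ (a_1⋯a_l, b_1⋯b_l, a_1b_1) sends the zero fibre of the moment map into the hypersurface {(u,v,w) ∈ ℂ³ : uv = w^l}, and it is surjective onto this hypersurface: (i) if a_{j+1}b_{j+1} = a_jb_j for all j, then (a_1⋯a_l)·(b_1⋯b_l) = (a_1b_1)^l; (ii) for every (u,v,w) ∈ ℂ³ with uv = w^l there exists (a,b) ∈ ℂ^{2l} with a_{j+1}b_{j+1} = a_jb_j for all j, a_1⋯a_l = u, b_1⋯b_l = v and a_1b_1 = w. -/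
/-!
The zero fibre contains the diagonal points `a_j = x`, `b_j = y`, which map to `(x^l, y^l, xy)`;
so surjectivity reduces to that of `ℂ² → {uv = w^l}`, `(x, y) ↦ (x^l, y^l, xy)`, i.e. of the
quotient map `ℂ² → ℂ²/(ℤ/lℤ)`. Conversely, on the zero fibre all products `a_j b_j` are equal,
so `∏ a_j · ∏ b_j = ∏ a_j b_j = (a_1 b_1)^l`.
-/

theorem ZMod.eq_apply_zero_of_periodic_one {n : ℕ} {α : Type*} {f : ZMod n → α}
    (h : Function.Periodic f 1) (j : ZMod n) : f j = f 0 := by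
  obtain ⟨k, rfl⟩ := ZMod.intCast_surjective j
  simpa using h.int_mul_eq k

theorem exists_pow_eq_pow_eq_mul_eq_of_mul_eq_pow {K : Type*} [Field K] [IsAlgClosed K]
    {n : ℕ} (hn : n ≠ 0) {u v w : K} (h : u * v = w ^ n) :
    ∃ x y : K, x ^ n = u ∧ y ^ n = v ∧ x * y = w := by
  obtain ⟨x, rfl⟩ := IsAlgClosed.exists_pow_nat_eq u (Nat.pos_of_ne_zero hn)
  by_cases hx : x = 0
  · subst hx
    have hw : w = 0 := pow_eq_zero_iff hn |>.mp (by simp [← h, hn])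
    obtain ⟨y, rfl⟩ := IsAlgClosed.exists_pow_nat_eq v (Nat.pos_of_ne_zero hn)
    exact ⟨0, y, rfl, rfl, by simp [hw]⟩
  · refine ⟨x, w / x, rfl, ?_, mul_div_cancel₀ w hx⟩
    rw [div_pow, ← h, mul_div_cancel_left₀ v (pow_ne_zero n hx)]

/-- The affine quiver variety `X_0` is the Kleinian singularity of type `A_{l−1}`:
algebraic content of the isomorphism `X_0 ≅ ℂ²/(ℤ/lℤ)`.
The zero fibre of the moment map consists of tuples `(a, b)` with
`a_{j+1} b_{j+1} = a_j b_j` for all `j` (indices mod `l`).  The map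
`(a,b) ↦ (a_1⋯a_l, b_1⋯b_l, a_1 b_1)` sends the zero fibre into the hypersurface
`{uv = w^l}` and is surjective onto it. -/
theorem kleinian_singularity_typeA (l : ℕ) [NeZero l] :
    (∀ a b : ZMod l → ℂ, (∀ j : ZMod l, a (j + 1) * b (j + 1) = a j * b j) →
      (∏ j : ZMod l, a j) * (∏ j : ZMod l, b j) = (a 1 * b 1) ^ l) ∧
    (∀ u v w : ℂ, u * v = w ^ l →
      ∃ a b : ZMod l → ℂ, (∀ j : ZMod l, a (j + 1) * b (j + 1) = a j * b j) ∧
        (∏ j : ZMod l, a j) = u ∧ (∏ j : ZMod l, b j) = v ∧ a 1 * b 1 = w) := by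
  constructor
  · intro a b h
    have hper : Function.Periodic (fun j => a j * b j) 1 := h
    have hconst (j : ZMod l) : a j * b j = a 1 * b 1 :=
      (ZMod.eq_apply_zero_of_periodic_one hper j).trans
        (ZMod.eq_apply_zero_of_periodic_one hper 1).symm
    rw [← Finset.prod_mul_distrib, Finset.prod_eq_pow_card fun j _ => hconst j,
      Finset.card_univ, ZMod.card]
  · intro u v w huv
    obtain ⟨x, y, rfl, rfl, rfl⟩ := exists_pow_eq_pow_eq_mul_eq_of_mul_eq_pow (NeZero.ne l) huv
    exact ⟨fun _ => x, fun _ => y, fun _ => rfl, by simp [ZMod.card], by simp [ZMod.card], rfl⟩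
end

section
/- (The pair (f_i, g_i) is a quantized symplectic coordinate on the chart X_i.) Fix 1 ≤ i ≤ l and assume that x_1,…,x_{i−1} and y_{i+1},…,y_l are units of R. Set f = x_1⋯x_i·(y_{i+1}⋯y_l)^{−1} and g = y_i⋯y_l·(x_1⋯x_{i−1})^{−1}. Then f·g = x_i·y_i and g·f = x_i·y_i + h·1; in particular g·f − f·g = h·1. -/
/-! Writing `u = x_1⋯x_{i-1}` and `v = y_{i+1}⋯y_l`, one has `f = u x_i v⁻¹` and `g = y_i v u⁻¹`,
where the units `u` and `v` commute with `x_i` and `y_i`. Hence `f g = u x_i y_i u⁻¹ = x_i y_i`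
and `g f = y_i v x_i v⁻¹ = y_i x_i`, and the canonical commutation relation finishes. -/

open scoped List

/-- The ordered product `f_{j₁} f_{j₂} ⋯` of the values of `f : Fin l → R` over the indices
`j ∈ Fin l` satisfying the (decidable) predicate `p`, taken in increasing order of indices. -/
def ordProd {R : Type*} [Ring R] {l : ℕ} (f : Fin l → R) (p : Fin l → Prop)
    [DecidablePred p] : R :=
  (((List.finRange l).filter fun j => decide (p j)).map f).prod

namespace List

variable {α : Type*} [LinearOrder α] {L : List α} {i : α}

theorem Pairwise.filter_le_eq_filter_lt_append (hL : L.Pairwise (· < ·)) (hi : i ∈ L) :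
    L.filter (· ≤ i) = L.filter (· < i) ++ [i] := by
  induction L with
  | nil => simp at hi
  | cons a t ih =>
    obtain ⟨ha, ht⟩ := pairwise_cons.mp hL
    rcases mem_cons.mp hi with rfl | hit
    · have hle : t.filter (· ≤ i) = [] := filter_eq_nil_iff.mpr fun j hj => by simpa using ha j hj
      have hlt : t.filter (· < i) = [] :=
        filter_eq_nil_iff.mpr fun j hj => by simpa using (ha j hj).le
      simp [hle, hlt]
    · have hai := ha i hit
      simp [hai, hai.le, ih ht hit]

theorem Pairwise.filter_ge_eq_cons_filter_gt (hL : L.Pairwise (· < ·)) (hi : i ∈ L) :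
    L.filter (i ≤ ·) = i :: L.filter (i < ·) := by
  induction L with
  | nil => simp at hi
  | cons a t ih =>
    obtain ⟨ha, ht⟩ := pairwise_cons.mp hL
    rcases mem_cons.mp hi with rfl | hit
    · simpa using filter_congr fun j hj => by simp [ha j hj, (ha j hj).le]
    · have hai := ha i hit
      simp [not_le.mpr hai, not_lt.mpr hai.le, ih ht hit]

end List

section OrdProd

variable {R : Type*} [Ring R] {l : ℕ} (f : Fin l → R)

theorem ordProd_le_eq_mul (i : Fin l) : ordProd f (· ≤ i) = ordProd f (· < i) * f i := by
  simp [ordProd,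
    (List.sortedLT_finRange l).pairwise.filter_le_eq_filter_lt_append (List.mem_finRange i)]

theorem ordProd_ge_eq_mul (i : Fin l) : ordProd f (i ≤ ·) = f i * ordProd f (i < ·) := by
  simp [ordProd,
    (List.sortedLT_finRange l).pairwise.filter_ge_eq_cons_filter_gt (List.mem_finRange i)]

variable {f} {p : Fin l → Prop} [DecidablePred p]

theorem commute_ordProd_left {r : R} (hc : ∀ j, p j → Commute (f j) r) :
    Commute (ordProd f p) r :=
  Commute.list_prod_left _ _ fun _ ha => by
    obtain ⟨j, hj, rfl⟩ := List.mem_map.mp ha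
    exact hc j (by simpa using hj)

theorem isUnit_ordProd (hu : ∀ j, p j → IsUnit (f j)) : IsUnit (ordProd f p) :=
  List.prod_isUnit fun _ ha => by
    obtain ⟨j, hj, rfl⟩ := List.mem_map.mp ha
    exact hu j (by simpa using hj)

end OrdProd

section Conjugation

variable {R : Type*} [Ring R] {a b : R} {u v : Rˣ}

theorem Units.mul_mul_inv_mul_mul_mul_inv_of_commute (hvb : Commute (v : R) b)
    (hu : Commute (u : R) (a * b)) :
    u * a * ↑v⁻¹ * (b * v * ↑u⁻¹) = a * b := by
  calc (u : R) * a * ↑v⁻¹ * (b * v * ↑u⁻¹) = u * a * (↑v⁻¹ * b * v) * ↑u⁻¹ := by noncomm_ring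
    _ = u * (a * b) * ↑u⁻¹ := by
      rw [hvb.units_inv_left.eq, Units.inv_mul_cancel_right, mul_assoc _ a]
    _ = a * b := by rw [hu.eq, Units.mul_inv_cancel_right]

theorem Units.mul_mul_inv_mul_mul_mul_inv_cancel_of_commute (hva : Commute (v : R) a) :
    b * v * ↑u⁻¹ * (u * a * ↑v⁻¹) = b * a := by
  calc b * (v : R) * ↑u⁻¹ * (u * a * ↑v⁻¹) = b * (v * (↑u⁻¹ * u) * a * ↑v⁻¹) := by noncomm_ring
    _ = b * a := by rw [Units.inv_mul, mul_one, hva.eq, Units.mul_inv_cancel_right]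

end Conjugation

/-- The pair `(f_i, g_i)` is a quantized symplectic coordinate on the chart `X_i`:
with `x_1, …, x_{i−1}` and `y_{i+1}, …, y_l` units (here indices are `Fin l`, so `j < i`
and `i < j` respectively), and
`f = x_1⋯x_i (y_{i+1}⋯y_l)⁻¹`, `g = y_i⋯y_l (x_1⋯x_{i−1})⁻¹`, one has
`f g = x_i y_i`, `g f = x_i y_i + h·1`, and in particular `g f − f g = h·1`. -/
theorem quantized_symplectic_coordinates {k : Type*} [CommRing k] {R : Type*} [Ring R]
    [Algebra k R] (h : k) (l : ℕ) (x y : Fin l → R)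
    (hxx : ∀ p q : Fin l, x p * x q = x q * x p)
    (hyy : ∀ p q : Fin l, y p * y q = y q * y p)
    (hyx : ∀ p q : Fin l, p ≠ q → y p * x q = x q * y p)
    (hcan : ∀ p : Fin l, y p * x p - x p * y p = h • (1 : R))
    (i : Fin l)
    (hxu : ∀ j : Fin l, j < i → IsUnit (x j))
    (hyu : ∀ j : Fin l, i < j → IsUnit (y j)) :
    ordProd x (· ≤ i) * Ring.inverse (ordProd y (i < ·)) *
        (ordProd y (i ≤ ·) * Ring.inverse (ordProd x (· < i))) = x i * y i ∧
    ordProd y (i ≤ ·) * Ring.inverse (ordProd x (· < i)) *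
        (ordProd x (· ≤ i) * Ring.inverse (ordProd y (i < ·))) = x i * y i + h • (1 : R) ∧
    ordProd y (i ≤ ·) * Ring.inverse (ordProd x (· < i)) *
          (ordProd x (· ≤ i) * Ring.inverse (ordProd y (i < ·))) -
        ordProd x (· ≤ i) * Ring.inverse (ordProd y (i < ·)) *
          (ordProd y (i ≤ ·) * Ring.inverse (ordProd x (· < i))) = h • (1 : R) := by
  obtain ⟨u, hu⟩ := isUnit_ordProd hxu
  obtain ⟨v, hv⟩ := isUnit_ordProd hyu
  have hu_xy : Commute (u : R) (x i * y i) := hu ▸ commute_ordProd_left fun j hj =>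
    Commute.mul_right (hxx j i) (Commute.symm (hyx i j hj.ne'))
  have hv_x : Commute (v : R) (x i) := hv ▸ commute_ordProd_left fun j hj => hyx j i hj.ne'
  have hv_y : Commute (v : R) (y i) := hv ▸ commute_ordProd_left fun j _ => hyy j i
  have hfg := Units.mul_mul_inv_mul_mul_mul_inv_of_commute hv_y hu_xy
  have hgf := Units.mul_mul_inv_mul_mul_mul_inv_cancel_of_commute (u := u) (b := y i) hv_x
  rw [eq_add_of_sub_eq' (hcan i)] at hgf
  rw [ordProd_le_eq_mul, ordProd_ge_eq_mul, ← hu, ← hv, Ring.inverse_unit, Ring.inverse_unit, hfg,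
    hgf]
  exact ⟨rfl, rfl, add_sub_cancel_left _ _⟩
end
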